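/- Let f be continuous at x ∈ {0,1}^ℕ and let f_N be the histogram estimator based on N = 2^k i.i.d. samples and the partition Π_k into length-k cylinders (whose mesh tends to 0). Then E[(f_N(x) − f(x))²] → 0 as N → ∞ if and only if N·λ([τ]_{k,j}) → ∞, where [τ]_{k,j} ∈ Π_k contains x. (For the 'only if' direction assume f(x) > 0.) -/

import Mathlib

open MeasureTheory Filter Topology

/-- The cylinder of the length-k initial segment of x. -/
def initCyl (x : ℕ → Bool) (k : ℕ) : Set (ℕ → Bool) := {y | ∀ i < k, y i = x i}

/-- f is continuous at x: for every ε > 0 there is s ∈ ℕ such that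
|f(x) - f(x')| < ε for all x' sharing an initial segment of length s with x. -/
def ContAtSeq (f : (ℕ → Bool) → ℝ) (x : ℕ → Bool) : Prop :=
  ∀ ε > 0, ∃ s : ℕ, ∀ y : ℕ → Bool, (∀ i < s, y i = x i) → |f x - f y| < ε

/-- The histogram estimator f_N(x) = F_N([τ]_{k,j})/λ([τ]_{k,j}) based on the
N = 2^k samples ω i, where [τ]_{k,j} is the length-k cylinder containing x. -/
noncomputable def histEst (lam : Measure (ℕ → Bool)) (x : ℕ → Bool) (k : ℕ)
    (ω : Fin (2 ^ k) → (ℕ → Bool)) : ℝ :=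
  ((2 ^ k : ℝ)⁻¹ * ∑ i, (initCyl x k).indicator (fun _ => (1 : ℝ)) (ω i)) /
    (lam (initCyl x k)).toReal

lemma measurableSet_initCyl (x : ℕ → Bool) (k : ℕ) : MeasurableSet (initCyl x k) := by
  have h : initCyl x k = ⋂ i ∈ Set.Iio k, (fun y : ℕ → Bool => y i) ⁻¹' {x i} := by
    ext y; simp [initCyl]
  rw [h]
  exact MeasurableSet.biInter (Set.to_countable _) fun i _ =>
    measurable_pi_apply i (measurableSet_singleton _)

lemma initCyl_antitone (x : ℕ → Bool) : Antitone (initCyl x) := by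
  intro a b hab y hy i hi
  exact hy i (lt_of_lt_of_le hi hab)

lemma integral_pi_single {α : Type*} [MeasurableSpace α] (μ : Measure α) [IsProbabilityMeasure μ]
    {C : Set α} (hC : MeasurableSet C) (n : ℕ) (i : Fin n) :
    ∫ ω : Fin n → α, C.indicator (fun _ => (1:ℝ)) (ω i) ∂(Measure.pi fun _ => μ)
      = (μ C).toReal := by
  letI : MeasureSpace α := { volume := μ }
  haveI : IsProbabilityMeasure (volume : Measure α) := inferInstanceAs (IsProbabilityMeasure μ)
  have hvol : (Measure.pi fun _ : Fin n => μ) = (volume : Measure (Fin n → α)) := rfl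
  rw [hvol]
  have hpt : ∀ ω : Fin n → α, C.indicator (fun _ => (1:ℝ)) (ω i)
      = ∏ l, (if l = i then C.indicator (fun _ => (1:ℝ)) (ω l) else 1) := by
    intro ω; rw [Finset.prod_ite_eq']; simp
  simp_rw [hpt]
  erw [MeasureTheory.integral_fintype_prod_eq_prod
    (fun l t => if l = i then C.indicator (fun _ => (1:ℝ)) t else 1)]
  have hfac : ∀ l : Fin n,
      (∫ t, (if l = i then C.indicator (fun _ => (1:ℝ)) t else 1) ∂(volume : Measure α))
        = if l = i then (μ C).toReal else 1 := by
    intro l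
    by_cases h : l = i
    · subst h
      simp only [eq_self_iff_true, if_true]
      rw [integral_indicator_const (1:ℝ) hC, smul_eq_mul, mul_one]; rfl
    · simp [h]
  rw [Finset.prod_congr rfl fun l _ => hfac l, Finset.prod_ite_eq']
  simp

lemma integral_pi_pair {α : Type*} [MeasurableSpace α] (μ : Measure α) [IsProbabilityMeasure μ]
    {C : Set α} (hC : MeasurableSet C) (n : ℕ) (i j : Fin n) (hij : i ≠ j) :
    ∫ ω : Fin n → α,
        C.indicator (fun _ => (1:ℝ)) (ω i) * C.indicator (fun _ => (1:ℝ)) (ω j)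
        ∂(Measure.pi fun _ => μ)
      = (μ C).toReal ^ 2 := by
  letI : MeasureSpace α := { volume := μ }
  haveI : IsProbabilityMeasure (volume : Measure α) := inferInstanceAs (IsProbabilityMeasure μ)
  have hvol : (Measure.pi fun _ : Fin n => μ) = (volume : Measure (Fin n → α)) := rfl
  rw [hvol]
  have hpt : ∀ ω : Fin n → α,
      C.indicator (fun _ => (1:ℝ)) (ω i) * C.indicator (fun _ => (1:ℝ)) (ω j)
      = ∏ l, ((if l = i then C.indicator (fun _ => (1:ℝ)) (ω l) else 1)
          * (if l = j then C.indicator (fun _ => (1:ℝ)) (ω l) else 1)) := by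
    intro ω
    rw [Finset.prod_mul_distrib, Finset.prod_ite_eq', Finset.prod_ite_eq']
    simp
  simp_rw [hpt]
  erw [MeasureTheory.integral_fintype_prod_eq_prod
    (fun l t => (if l = i then C.indicator (fun _ => (1:ℝ)) t else 1)
      * (if l = j then C.indicator (fun _ => (1:ℝ)) t else 1))]
  have hfac : ∀ l : Fin n,
      (∫ t, ((if l = i then C.indicator (fun _ => (1:ℝ)) t else 1)
          * (if l = j then C.indicator (fun _ => (1:ℝ)) t else 1)) ∂(volume : Measure α))
        = (if l = i then (μ C).toReal else 1) * (if l = j then (μ C).toReal else 1) := by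
    intro l
    by_cases h1 : l = i <;> by_cases h2 : l = j
    · exact absurd (h1 ▸ h2 ▸ rfl : i = j) hij
    · subst h1
      simp only [eq_self_iff_true, if_true, if_neg hij, mul_one]
      rw [integral_indicator_const (1:ℝ) hC, smul_eq_mul, mul_one]; rfl
    · subst h2
      simp only [eq_self_iff_true, if_true, if_neg (Ne.symm hij), one_mul]
      rw [integral_indicator_const (1:ℝ) hC, smul_eq_mul, mul_one]; rfl
    · simp [h1, h2]
  rw [Finset.prod_congr rfl fun l _ => hfac l, Finset.prod_mul_distrib,
    Finset.prod_ite_eq', Finset.prod_ite_eq']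
  simp [sq]

lemma mse_formula {α : Type*} [MeasurableSpace α] (μ : Measure α) [IsProbabilityMeasure μ]
    {C : Set α} (hC : MeasurableSet C) (n : ℕ) (hn : 0 < n) (L m : ℝ) (hL : 0 < L) :
    ∫ ω : Fin n → α, (((n : ℝ)⁻¹ * ∑ i, C.indicator (fun _ => (1:ℝ)) (ω i)) / L - m) ^ 2
        ∂(Measure.pi fun _ => μ)
      = ((μ C).toReal / L - m) ^ 2
        + (μ C).toReal * (1 - (μ C).toReal) / ((n : ℝ) * L ^ 2) := by
  classical
  set g : α → ℝ := C.indicator (fun _ => (1:ℝ)) with hg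
  set p : ℝ := (μ C).toReal with hp
  set Pi : Measure (Fin n → α) := Measure.pi fun _ => μ with hPi
  haveI : IsProbabilityMeasure Pi := by rw [hPi]; infer_instance
  have hint1 : ∀ i : Fin n, Integrable (fun ω : Fin n → α => g (ω i)) Pi := by
    intro i
    have he : (fun ω : Fin n → α => g (ω i))
        = Set.indicator ((fun ω : Fin n → α => ω i) ⁻¹' C) (fun _ => (1:ℝ)) := by
      ext ω; by_cases h : ω i ∈ C <;> simp [hg, Set.indicator_apply, h]
    rw [he]
    exact (integrable_const (1:ℝ)).indicator (measurable_pi_apply i hC)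
  have hint2 : ∀ i j : Fin n, Integrable (fun ω : Fin n → α => g (ω i) * g (ω j)) Pi := by
    intro i j
    have he : (fun ω : Fin n → α => g (ω i) * g (ω j))
        = Set.indicator (((fun ω : Fin n → α => ω i) ⁻¹' C) ∩ ((fun ω : Fin n → α => ω j) ⁻¹' C))
            (fun _ => (1:ℝ)) := by
      ext ω
      by_cases h1 : ω i ∈ C <;> by_cases h2 : ω j ∈ C <;>
        simp [hg, Set.indicator_apply, h1, h2]
    rw [he]
    exact (integrable_const (1:ℝ)).indicator
      ((measurable_pi_apply i hC).inter (measurable_pi_apply j hC))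
  have hintS : Integrable (fun ω : Fin n → α => ∑ i, g (ω i)) Pi :=
    integrable_finset_sum _ fun i _ => hint1 i
  have hintSS : Integrable (fun ω : Fin n → α => ∑ i, ∑ j, g (ω i) * g (ω j)) Pi :=
    integrable_finset_sum _ fun i _ => integrable_finset_sum _ fun j _ => hint2 i j
  have hsum : ∀ ω : Fin n → α,
      (((n : ℝ)⁻¹ * ∑ i, g (ω i)) / L - m) ^ 2
        = ((n : ℝ)⁻¹ * L⁻¹) ^ 2 * (∑ i, ∑ j, g (ω i) * g (ω j))
          + (-2 * ((n : ℝ)⁻¹ * L⁻¹) * m) * (∑ i, g (ω i)) + m ^ 2 := by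
    intro ω
    have h2 : (∑ i, ∑ j, g (ω i) * g (ω j)) = (∑ i, g (ω i)) * (∑ j, g (ω j)) :=
      (Finset.sum_mul_sum _ _ _ _).symm
    rw [h2]; ring
  simp_rw [hsum]
  have hAB : Integrable (fun ω : Fin n → α =>
      ((n:ℝ)⁻¹ * L⁻¹) ^ 2 * (∑ i, ∑ j, g (ω i) * g (ω j))
        + -2 * ((n:ℝ)⁻¹ * L⁻¹) * m * ∑ i, g (ω i)) Pi :=
    (hintSS.const_mul _).add (hintS.const_mul _)
  rw [integral_add hAB (integrable_const (m ^ 2)),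
    integral_add (hintSS.const_mul (((n:ℝ)⁻¹ * L⁻¹) ^ 2))
      (hintS.const_mul (-2 * ((n:ℝ)⁻¹ * L⁻¹) * m)),
    integral_const_mul, integral_const_mul, integral_const, probReal_univ,
    one_smul,
    integral_finset_sum _ fun i _ => hint1 i,
    integral_finset_sum _ fun i _ => integrable_finset_sum _ fun j _ => hint2 i j]
  have hval1 : ∀ i : Fin n, ∫ ω, g (ω i) ∂Pi = p := fun i => integral_pi_single μ hC n i
  have hval2 : ∀ i : Fin n, (∫ ω, ∑ j, g (ω i) * g (ω j) ∂Pi) = p + ((n:ℝ) - 1) * p ^ 2 := by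
    intro i
    rw [integral_finset_sum _ fun j _ => hint2 i j]
    have hterm : ∀ j : Fin n,
        (∫ ω, g (ω i) * g (ω j) ∂Pi) = (if i = j then p - p ^ 2 else 0) + p ^ 2 := by
      intro j
      by_cases h : i = j
      · subst h
        have hgg : ∀ ω : Fin n → α, g (ω i) * g (ω i) = g (ω i) := by
          intro ω; by_cases hmem : ω i ∈ C <;> simp [hg, Set.indicator_apply, hmem]
        simp_rw [hgg]
        rw [integral_pi_single μ hC n i, ← hp]; simp only [if_true]; ring
      · rw [if_neg h, zero_add]
        exact integral_pi_pair μ hC n i j h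
    rw [Finset.sum_congr rfl fun j _ => hterm j, Finset.sum_add_distrib, Finset.sum_ite_eq,
      Finset.sum_const, Finset.card_univ, Fintype.card_fin, nsmul_eq_mul]
    simp only [Finset.mem_univ, if_true]
    ring
  rw [Finset.sum_congr rfl fun i _ => hval2 i, Finset.sum_congr rfl fun i _ => hval1 i,
    Finset.sum_const, Finset.sum_const, Finset.card_univ, Fintype.card_fin, nsmul_eq_mul,
    nsmul_eq_mul]
  have hn' : (n:ℝ) ≠ 0 := Nat.cast_ne_zero.2 hn.ne'
  field_simp
  ring

/-- Mean-square consistency of the histogram estimator: for f continuous at x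
(with f(x) > 0), E[(f_N(x) − f(x))²] → 0 as N = 2^k → ∞ if and only if
N·λ([τ]_{k,j}) → ∞, where [τ]_{k,j} is the length-k cylinder containing x. -/
theorem histEst_mean_square_consistency_iff
    (lam : Measure (ℕ → Bool)) (μ : Measure (ℕ → Bool)) [IsProbabilityMeasure μ]
    (f : (ℕ → Bool) → ℝ) (hf0 : ∀ t, 0 ≤ f t) (hfm : Measurable f)
    (hμ : μ = lam.withDensity fun t => ENNReal.ofReal (f t))
    (hcyl : ∀ (z : ℕ → Bool) (k : ℕ), 0 < lam (initCyl z k) ∧ lam (initCyl z k) < ⊤)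
    (x : ℕ → Bool) (hcont : ContAtSeq f x) (hfx : 0 < f x) :
    Tendsto (fun k : ℕ =>
        ∫ ω, (histEst lam x k ω - f x) ^ 2 ∂(Measure.pi fun _ : Fin (2 ^ k) => μ))
      atTop (𝓝 0) ↔
    Tendsto (fun k : ℕ => (2 ^ k : ℝ) * (lam (initCyl x k)).toReal)
      atTop atTop := by
  classical
  set m : ℝ := f x with hm
  set pk : ℕ → ℝ := fun k => (μ (initCyl x k)).toReal with hpk
  set lk : ℕ → ℝ := fun k => (lam (initCyl x k)).toReal with hlk
  have hlkpos : ∀ k, 0 < lk k := fun k =>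
    ENNReal.toReal_pos (hcyl x k).1.ne' (hcyl x k).2.ne
  have hpk0 : ∀ k, 0 ≤ pk k := fun k => ENNReal.toReal_nonneg
  have hpk1 : ∀ k, pk k ≤ 1 := fun k => by
    simpa using ENNReal.toReal_mono ENNReal.one_ne_top (prob_le_one (μ := μ) (s := initCyl x k))
  have hNpos : ∀ k : ℕ, (0:ℝ) < 2 ^ k := fun k => by positivity
  -- the MSE formula
  have hmse : ∀ k : ℕ,
      (∫ ω, (histEst lam x k ω - f x) ^ 2 ∂(Measure.pi fun _ : Fin (2 ^ k) => μ))
        = (pk k / lk k - m) ^ 2 + pk k * (1 - pk k) / ((2 ^ k : ℝ) * (lk k) ^ 2) := by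
    intro k
    have hcast : ((2 ^ k : ℕ) : ℝ) = (2 ^ k : ℝ) := by push_cast; ring
    have h := mse_formula μ (measurableSet_initCyl x k) (2 ^ k)
      (Nat.pow_pos (by norm_num : 0 < 2)) (lk k) m (hlkpos k)
    rw [hcast] at h
    simpa [histEst, hlk, hpk] using h
  -- convergence of the ratio pk / lk to m
  have hr : Tendsto (fun k => pk k / lk k) atTop (𝓝 m) := by
    rw [Metric.tendsto_atTop]
    intro ε hε
    obtain ⟨s, hs⟩ := hcont (ε / 2) (by positivity)
    refine ⟨s, fun k hk => ?_⟩
    have hsub : initCyl x k ⊆ initCyl x s := initCyl_antitone x hk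
    have hub : μ (initCyl x k) ≤ ENNReal.ofReal (m + ε / 2) * lam (initCyl x k) := by
      rw [hμ, withDensity_apply _ (measurableSet_initCyl x k), ← setLIntegral_const]
      refine setLIntegral_mono' (measurableSet_initCyl x k) fun t ht => ?_
      refine ENNReal.ofReal_le_ofReal ?_
      have h1 := abs_lt.1 (hs t fun i hi => hsub ht i hi)
      linarith [h1.1]
    have hlb : ENNReal.ofReal (m - ε / 2) * lam (initCyl x k) ≤ μ (initCyl x k) := by
      rw [hμ, withDensity_apply _ (measurableSet_initCyl x k), ← setLIntegral_const]
      refine setLIntegral_mono' (measurableSet_initCyl x k) fun t ht => ?_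
      refine ENNReal.ofReal_le_ofReal ?_
      have h1 := abs_lt.1 (hs t fun i hi => hsub ht i hi)
      linarith [h1.2]
    have hub' : pk k ≤ (m + ε / 2) * lk k := by
      have hfin : ENNReal.ofReal (m + ε / 2) * lam (initCyl x k) ≠ ⊤ :=
        ENNReal.mul_ne_top ENNReal.ofReal_ne_top (hcyl x k).2.ne
      have := ENNReal.toReal_mono hfin hub
      rwa [ENNReal.toReal_mul, ENNReal.toReal_ofReal (by positivity)] at this
    have hlb' : (m - ε / 2) * lk k ≤ pk k := by
      by_cases hsign : 0 ≤ m - ε / 2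
      · have := ENNReal.toReal_mono (measure_ne_top μ _) hlb
        rwa [ENNReal.toReal_mul, ENNReal.toReal_ofReal hsign] at this
      · push_neg at hsign
        calc (m - ε / 2) * lk k ≤ 0 :=
              mul_nonpos_of_nonpos_of_nonneg hsign.le (hlkpos k).le
          _ ≤ pk k := hpk0 k
    have h1 : pk k / lk k ≤ m + ε / 2 := (div_le_iff₀ (hlkpos k)).2 hub'
    have h2 : m - ε / 2 ≤ pk k / lk k := (le_div_iff₀ (hlkpos k)).2 hlb'
    rw [Real.dist_eq]
    have : |pk k / lk k - m| ≤ ε / 2 := abs_le.2 ⟨by linarith, by linarith⟩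
    linarith [half_lt_self hε]
  have hbias : Tendsto (fun k => (pk k / lk k - m) ^ 2) atTop (𝓝 0) := by
    have h0 : Tendsto (fun k => pk k / lk k - m) atTop (𝓝 0) := by
      simpa using hr.sub (tendsto_const_nhds : Tendsto (fun _ : ℕ => m) atTop (𝓝 m))
    simpa using h0.pow 2
  set V : ℕ → ℝ := fun k => pk k * (1 - pk k) / ((2 ^ k : ℝ) * (lk k) ^ 2) with hV
  have hVid : ∀ k, V k = (pk k / lk k) * ((1 - pk k) * ((2 ^ k : ℝ) * lk k)⁻¹) := by
    intro k
    have h1 : lk k ≠ 0 := (hlkpos k).ne'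
    have h2 : (2 ^ k : ℝ) ≠ 0 := (hNpos k).ne'
    simp only [hV, div_eq_mul_inv, mul_inv]
    ring
  have hV0 : ∀ k, 0 ≤ V k := fun k =>
    div_nonneg (mul_nonneg (hpk0 k) (by linarith [hpk1 k])) (by positivity)
  have hinvpos : ∀ k, (0:ℝ) < ((2 ^ k : ℝ) * lk k)⁻¹ := fun k => by
    have := hlkpos k; have := hNpos k; positivity
  constructor
  · -- MSE → 0 implies N·λ → ∞
    intro hMSE
    have hVt : Tendsto V atTop (𝓝 0) := by
      have h1 : Tendsto (fun k => (pk k / lk k - m) ^ 2 + V k) atTop (𝓝 0) :=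
        hMSE.congr fun k => hmse k
      have h2 := h1.sub hbias
      simp only [add_sub_cancel_left, sub_zero] at h2
      exact h2
    have hanti : Antitone pk := fun a b hab =>
      ENNReal.toReal_mono (measure_ne_top μ _) (measure_mono (initCyl_antitone x hab))
    have hbdd : BddBelow (Set.range pk) := ⟨0, by rintro y ⟨k, rfl⟩; exact hpk0 k⟩
    set q : ℝ := ⨅ k, pk k with hq
    have hqt : Tendsto pk atTop (𝓝 q) := tendsto_atTop_ciInf hanti hbdd
    by_cases hq1 : 1 ≤ q
    · -- all pk = 1
      have hpke : ∀ k, pk k = 1 := fun k =>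
        le_antisymm (hpk1 k) (le_trans hq1 (ciInf_le hbdd k))
      have hlkinv : Tendsto (fun k => (lk k)⁻¹) atTop (𝓝 m) := by
        refine hr.congr fun k => ?_
        rw [hpke k, one_div]
      have hlkt : Tendsto lk atTop (𝓝 m⁻¹) := by
        have := hlkinv.inv₀ hfx.ne'
        simpa [inv_inv] using this
      exact (tendsto_pow_atTop_atTop_of_one_lt (by norm_num : (1:ℝ) < 2)).atTop_mul_pos
        (inv_pos.2 hfx) hlkt
    · push_neg at hq1
      have hev1 : ∀ᶠ k in atTop, m / 2 < pk k / lk k :=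
        hr.eventually (eventually_gt_nhds (by linarith))
      have hev2 : ∀ᶠ k in atTop, pk k < (1 + q) / 2 :=
        hqt.eventually (eventually_lt_nhds (by linarith))
      set c : ℝ := (m / 2) * ((1 - q) / 2) with hc
      have hcpos : 0 < c := by
        apply mul_pos <;> [linarith; linarith]
      have hle : ∀ᶠ k in atTop, ((2 ^ k : ℝ) * lk k)⁻¹ ≤ c⁻¹ * V k := by
        filter_upwards [hev1, hev2] with k h1 h2
        have hb1 : m / 2 ≤ pk k / lk k := h1.le
        have hb2 : (1 - q) / 2 ≤ 1 - pk k := by linarith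
        have hkey : c * ((2 ^ k : ℝ) * lk k)⁻¹ ≤ V k := by
          rw [hVid k, hc]
          calc m / 2 * ((1 - q) / 2) * ((2 ^ k : ℝ) * lk k)⁻¹
              ≤ (pk k / lk k * (1 - pk k)) * ((2 ^ k : ℝ) * lk k)⁻¹ := by
                apply mul_le_mul_of_nonneg_right _ (hinvpos k).le
                apply mul_le_mul hb1 hb2 (by linarith) (le_trans (by linarith) hb1)
            _ = pk k / lk k * ((1 - pk k) * ((2 ^ k : ℝ) * lk k)⁻¹) := by ring
        have := mul_le_mul_of_nonneg_left hkey (inv_nonneg.2 hcpos.le)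
        rwa [← mul_assoc, inv_mul_cancel₀ hcpos.ne', one_mul] at this
      have hinvt : Tendsto (fun k => ((2 ^ k : ℝ) * lk k)⁻¹) atTop (𝓝 0) := by
        have hg : Tendsto (fun k => c⁻¹ * V k) atTop (𝓝 0) := by
          simpa using hVt.const_mul c⁻¹
        exact squeeze_zero' (Eventually.of_forall fun k => (hinvpos k).le) hle hg
      have hinvt' : Tendsto (fun k => ((2 ^ k : ℝ) * lk k)⁻¹) atTop (𝓝[>] 0) :=
        tendsto_nhdsWithin_of_tendsto_nhds_of_eventually_within _ hinvt
          (Eventually.of_forall fun k => hinvpos k)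
      exact hinvt'.inv_tendsto_nhdsGT_zero.congr fun k => by simp [hlk]
  · -- N·λ → ∞ implies MSE → 0
    intro hNL
    have hinvt : Tendsto (fun k => ((2 ^ k : ℝ) * lk k)⁻¹) atTop (𝓝 0) :=
      hNL.inv_tendsto_atTop
    have hVle : ∀ k, V k ≤ (pk k / lk k) * ((2 ^ k : ℝ) * lk k)⁻¹ := by
      intro k
      rw [hVid k]
      apply mul_le_mul_of_nonneg_left _ (div_nonneg (hpk0 k) (hlkpos k).le)
      exact mul_le_of_le_one_left (hinvpos k).le (by linarith [hpk0 k])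
    have hVt : Tendsto V atTop (𝓝 0) := by
      have hg : Tendsto (fun k => (pk k / lk k) * ((2 ^ k : ℝ) * lk k)⁻¹) atTop (𝓝 0) := by
        simpa using hr.mul hinvt
      exact squeeze_zero' (Eventually.of_forall hV0) (Eventually.of_forall hVle) hg
    have h1 : Tendsto (fun k => (pk k / lk k - m) ^ 2 + V k) atTop (𝓝 0) := by
      simpa using hbias.add hVt
    exact h1.congr fun k => (hmse k).symm
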